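/- arXiv:1307.3019 — 3 statements merged into one kernel-verified Lean document; each statement's English description precedes it below -/
import Mathlib

section
/- Let q ≡ 1 (mod 6) be a prime power, ω a primitive cube root of unity in F_q, W an F_q-vector space, and {x, y, z} a set of three distinct vectors with x + y + z = 0 and x, y linearly independent. Set u₀ = (1 − ω²)(ωx − y)/3 and v₀ = (1 − ω²)(ωy − x)/3. Then u₀ and v₀ are linearly independent and T(u₀, v₀) = {x, y, z}. -/
/-! Write `c = (1 - ω²)/3`. Since `(1 - ω)(1 - ω²) = 3` with both factors nonzero, `3` is
invertible and `c(1 - ω) = 1`; a direct computation then gives `u₀ + v₀ = -(x + y) = z`,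
`ωu₀ + ω²v₀ = y` and `ω²u₀ + ωv₀ = x`. The last two identities put `x` and `y` in the span of
`u₀, v₀`, which is therefore 2-dimensional, so `u₀, v₀` are linearly independent. -/

/-- The triple `T(u,v) = {u+v, ωu+ω²v, ω²u+ωv}`. -/
def Ttriple {F W : Type*} [Field F] [AddCommGroup W] [Module F W]
    (ω : F) (u v : W) : Set W :=
  {u + v, ω • u + ω ^ 2 • v, ω ^ 2 • u + ω • v}

open Submodule Set

theorem LinearIndependent.of_span_range_le {R M ι : Type*} [Semiring R] [OrzechProperty R]
    [Nontrivial R] [AddCommMonoid M] [Module R M] [Fintype ι] {b b' : ι → M}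
    (hb : LinearIndependent R b) (hle : span R (range b) ≤ span R (range b')) :
    LinearIndependent R b' := by
  rw [linearIndependent_iff_card_le_finrank_span]
  calc Fintype.card ι = (range b).finrank R := (finrank_span_eq_card hb).symm
    _ ≤ (range b').finrank R :=
      have := Module.Finite.span_of_finite R (finite_range b')
      Submodule.finrank_mono hle

section CubeRoot

variable {F : Type*} [Field F] {ω : F}

theorem sq_add_self_add_one_eq_zero (hω1 : ω ≠ 1) (hω3 : ω ^ 3 = 1) : ω ^ 2 + ω + 1 = 0 := by
  have hmul : (ω - 1) * (ω ^ 2 + ω + 1) = 0 := by linear_combination hω3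
  exact (mul_eq_zero.mp hmul).resolve_left (sub_ne_zero.mpr hω1)

theorem sq_ne_one (hω1 : ω ≠ 1) (hω3 : ω ^ 3 = 1) : ω ^ 2 ≠ 1 :=
  fun h ↦ hω1 (by linear_combination hω3 - ω * h)

theorem one_sub_sq_div_three_mul_one_sub (hω1 : ω ≠ 1) (hω3 : ω ^ 3 = 1) :
    (1 - ω ^ 2) / 3 * (1 - ω) = 1 := by
  have h3 : (1 - ω) * (1 - ω ^ 2) = 3 := by
    linear_combination hω3 - sq_add_self_add_one_eq_zero hω1 hω3
  have h3ne : (3 : F) ≠ 0 :=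
    h3 ▸ mul_ne_zero (sub_ne_zero.mpr hω1.symm) (sub_ne_zero.mpr (sq_ne_one hω1 hω3).symm)
  field_simp
  linear_combination h3

end CubeRoot

section SmulSub

variable {F W : Type*} [Field F] [AddCommGroup W] [Module F W] {c ω : F} (x y : W)

theorem smul_sub_add_smul_sub_eq (hc : c * (1 - ω) = 1) :
    c • (ω • x - y) + c • (ω • y - x) = -(x + y) := by
  match_scalars <;> linear_combination -hc

theorem smul_smul_sub_add_sq_smul_smul_sub_eq (hc : c * (1 - ω) = 1) (hω3 : ω ^ 3 = 1) :
    ω • (c • (ω • x - y)) + ω ^ 2 • (c • (ω • y - x)) = y := by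
  match_scalars
  · ring
  · linear_combination c * hω3 + hc

theorem sq_smul_smul_sub_add_smul_smul_sub_eq (hc : c * (1 - ω) = 1) (hω3 : ω ^ 3 = 1) :
    ω ^ 2 • (c • (ω • x - y)) + ω • (c • (ω • y - x)) = x := by
  match_scalars
  · linear_combination c * hω3 + hc
  · ring

theorem Ttriple_smul_sub_eq (hc : c * (1 - ω) = 1) (hω3 : ω ^ 3 = 1) :
    Ttriple ω (c • (ω • x - y)) (c • (ω • y - x)) = {x, y, -(x + y)} := by
  rw [Ttriple, smul_sub_add_smul_sub_eq x y hc, smul_smul_sub_add_sq_smul_smul_sub_eq x y hc hω3,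
    sq_smul_smul_sub_add_smul_smul_sub_eq x y hc hω3, pair_comm y x, insert_comm (-(x + y)) x,
    pair_comm (-(x + y)) y]

theorem linearIndependent_smul_sub (hc : c * (1 - ω) = 1) (hω3 : ω ^ 3 = 1)
    (hind : LinearIndependent F ![x, y]) :
    LinearIndependent F ![c • (ω • x - y), c • (ω • y - x)] := by
  refine hind.of_span_range_le (span_le.mpr (range_subset_iff.mpr (Fin.forall_fin_two.mpr ?_)))
  have hS (a b : F) :
      a • (c • (ω • x - y)) + b • (c • (ω • y - x)) ∈
        span F (range ![c • (ω • x - y), c • (ω • y - x)]) :=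
    add_mem (smul_mem _ a (subset_span ⟨0, rfl⟩)) (smul_mem _ b (subset_span ⟨1, rfl⟩))
  constructor
  · have hx := hS (ω ^ 2) ω
    rw [sq_smul_smul_sub_add_smul_smul_sub_eq x y hc hω3] at hx
    exact hx
  · have hy := hS ω (ω ^ 2)
    rw [smul_smul_sub_add_sq_smul_smul_sub_eq x y hc hω3] at hy
    exact hy

end SmulSub

theorem Ttriple_surjective_general (F : Type*) [Field F] (ω : F) (hω : ω ≠ 1 ∧ ω ^ 3 = 1)
    (W : Type*) [AddCommGroup W] [Module F W] (x y z : W)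
    (hsum : x + y + z = 0) (hind : LinearIndependent F ![x, y]) :
    LinearIndependent F
        ![((1 - ω ^ 2) / 3) • (ω • x - y), ((1 - ω ^ 2) / 3) • (ω • y - x)] ∧
      Ttriple ω (((1 - ω ^ 2) / 3) • (ω • x - y)) (((1 - ω ^ 2) / 3) • (ω • y - x)) =
        {x, y, z} := by
  obtain ⟨hω1, hω3⟩ := hω
  have hc := one_sub_sq_div_three_mul_one_sub hω1 hω3
  rw [eq_neg_of_add_eq_zero_right hsum]
  exact ⟨linearIndependent_smul_sub x y hc hω3 hind, Ttriple_smul_sub_eq x y hc hω3⟩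

/-- For a zero-sum triple `{x,y,z}` of distinct vectors with `x, y` linearly
independent, setting `u₀ = (1-ω²)(ωx-y)/3` and `v₀ = (1-ω²)(ωy-x)/3`, the vectors
`u₀, v₀` are linearly independent and `T(u₀,v₀) = {x,y,z}`. -/
theorem Ttriple_surjective (F : Type*) [Field F] [Fintype F]
    (hq : Fintype.card F % 6 = 1) (ω : F) (hω : ω ≠ 1 ∧ ω ^ 3 = 1)
    (W : Type*) [AddCommGroup W] [Module F W] (x y z : W)
    (hxy : x ≠ y) (hyz : y ≠ z) (hxz : x ≠ z)
    (hsum : x + y + z = 0) (hind : LinearIndependent F ![x, y]) :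
    LinearIndependent F
        ![((1 - ω ^ 2) / 3) • (ω • x - y), ((1 - ω ^ 2) / 3) • (ω • y - x)] ∧
      Ttriple ω (((1 - ω ^ 2) / 3) • (ω • x - y)) (((1 - ω ^ 2) / 3) • (ω • y - x)) =
        {x, y, z} :=
  Ttriple_surjective_general F ω hω W x y z hsum hind
end

section
/- Let q = 6t + 1 be a prime power, g a primitive root of F_q, ω = g^{2t}, and let L be a 2-dimensional F_q-vector space with a nondegenerate alternating bilinear form f: L × L → F_q. Fix a nonzero u ∈ L, let K = span(u), and fix c ∈ F_q^*. Then the q(q−1)/3 triples ±T(u,v) = {±(u+v), ±(ωu+ω²v), ±(ω²u+ωv)}, taken over all v ∈ L with f(u,v) ∈ {g^m c : 0 ≤ m < t}, form a partition of L ∖ K. -/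
open Set Function

theorem Set.ncard_sUnion_of_pairwiseDisjoint {α : Type*} [Finite α] {𝒯 : Set (Set α)} {k : ℕ}
    (hdisj : 𝒯.PairwiseDisjoint id) (hcard : ∀ S ∈ 𝒯, S.ncard = k) :
    (⋃₀ 𝒯).ncard = k * 𝒯.ncard := by
  calc (⋃₀ 𝒯).ncard = ∑ᶠ S ∈ 𝒯, (id S).ncard :=
        (toFinite 𝒯).ncard_biUnion (fun _ _ ↦ toFinite _) hdisj ▸ congrArg _ sUnion_eq_biUnion
    _ = ∑ᶠ S ∈ 𝒯, k * 1 :=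
        finsum_mem_congr rfl fun S hS ↦ (hcard S hS).trans (mul_one k).symm
    _ = k * 𝒯.ncard := by rw [← mul_finsum_mem, finsum_one]

section ImageBlocks

variable {A B X : Type*} (φ : A → B → X) (𝒜 : Set (Set A)) (V : Set B)

def imageBlocks : Set (Set X) := {S | ∃ v ∈ V, ∃ P ∈ 𝒜, S = (φ · v) '' P}

variable {φ 𝒜 V}

theorem sUnion_imageBlocks : ⋃₀ imageBlocks φ 𝒜 V = uncurry φ '' (⋃₀ 𝒜 ×ˢ V) := by
  ext x
  simp only [imageBlocks, mem_sUnion, mem_image, mem_prod, Prod.exists, uncurry_apply_pair]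
  constructor
  · rintro ⟨_, ⟨v, hv, P, hP, rfl⟩, a, ha, rfl⟩
    exact ⟨a, v, ⟨⟨P, hP, ha⟩, hv⟩, rfl⟩
  · rintro ⟨a, v, ⟨⟨P, hP, ha⟩, hv⟩, rfl⟩
    exact ⟨_, ⟨v, hv, P, hP, rfl⟩, a, ha, rfl⟩

theorem ncard_of_mem_imageBlocks {k : ℕ} (hinj : InjOn (uncurry φ) (⋃₀ 𝒜 ×ˢ V))
    (hcard : ∀ P ∈ 𝒜, P.ncard = k) : ∀ S ∈ imageBlocks φ 𝒜 V, S.ncard = k := by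
  rintro _ ⟨v, hv, P, hP, rfl⟩
  rw [InjOn.ncard_image, hcard P hP]
  intro a ha b hb hab
  exact congrArg Prod.fst (@hinj (a, v) ⟨⟨P, hP, ha⟩, hv⟩ (b, v) ⟨⟨P, hP, hb⟩, hv⟩ hab)

theorem pairwiseDisjoint_imageBlocks (h𝒜 : 𝒜.PairwiseDisjoint id)
    (hinj : InjOn (uncurry φ) (⋃₀ 𝒜 ×ˢ V)) : (imageBlocks φ 𝒜 V).PairwiseDisjoint id := by
  rintro _ ⟨v, hv, P, hP, rfl⟩ _ ⟨v', hv', P', hP', rfl⟩ hne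
  refine disjoint_left.2 ?_
  rintro _ ⟨a, ha, rfl⟩ ⟨a', ha', hx⟩
  obtain ⟨rfl, rfl⟩ :=
    Prod.ext_iff.1 (@hinj (a', v') ⟨⟨P', hP', ha'⟩, hv'⟩ (a, v) ⟨⟨P, hP, ha⟩, hv⟩ hx)
  obtain rfl : P = P' := h𝒜.elim hP hP' (not_disjoint_iff.2 ⟨_, ha, ha'⟩)
  exact hne rfl

end ImageBlocks

theorem ne_zero_of_forall_pow_eq {M₀ : Type*} [MonoidWithZero M₀] {g x : M₀} (hx0 : x ≠ 0)
    (hx1 : x ≠ 1) (hg : ∀ x : M₀, x ≠ 0 → ∃ k : ℕ, g ^ k = x) : g ≠ 0 := by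
  rintro rfl
  obtain ⟨_ | k, hk⟩ := hg x hx0
  · exact hx1 (by simpa using hk.symm)
  · exact hx0 (by simpa using hk.symm)

theorem orderOf_eq_card_sub_one {F : Type*} [Field F] [Fintype F] {g : F} (hg0 : g ≠ 0)
    (hg : ∀ x : F, x ≠ 0 → ∃ k : ℕ, g ^ k = x) : orderOf g = Fintype.card F - 1 := by
  classical
  rw [← Fintype.card_units, ← Nat.card_eq_fintype_card, ← Units.val_mk0 hg0, orderOf_units]
  refine orderOf_eq_card_of_forall_mem_powers fun x ↦ ?_
  obtain ⟨k, hk⟩ := hg x x.ne_zero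
  exact ⟨k, Units.ext (by simpa using hk)⟩

theorem bijOn_mul_setOf_pow_eq_one {F : Type*} [Field F] {g c : F} {n t : ℕ}
    (hn : 0 < n) (ht : 0 < t) (hord : orderOf g = n * t)
    (hg : ∀ x : F, x ≠ 0 → ∃ k : ℕ, g ^ k = x) (hc : c ≠ 0) :
    BijOn (fun p : F × F ↦ p.1 * p.2) ({ζ | ζ ^ n = 1} ×ˢ {y | ∃ m < t, y = g ^ m * c})
      {x | x ≠ 0} := by
  have hfin : IsOfFinOrder g := orderOf_pos_iff.1 (hord ▸ Nat.mul_pos hn ht)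
  have hg0 : g ≠ 0 := fun h ↦ by simp [h] at hord; omega
  refine ⟨?_, ?_, ?_⟩
  · rintro ⟨ζ, _⟩ ⟨hζ : ζ ^ n = 1, m, -, rfl⟩
    have : ζ ≠ 0 := by rintro rfl; simp [hn.ne'] at hζ
    exact mul_ne_zero this (mul_ne_zero (pow_ne_zero _ hg0) hc)
  · rintro ⟨ζ, _⟩ ⟨hζ : ζ ^ n = 1, m, hm, rfl⟩ ⟨ζ', _⟩ ⟨hζ' : ζ' ^ n = 1, m', hm', rfl⟩ h
    -- raising to the `n`-th power kills `ζ` and `ζ'`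
    have hpow : g ^ (n * m) = g ^ (n * m') := by
      have := congrArg (· ^ n) (mul_right_cancel₀ hc (by simpa only [← mul_assoc] using h))
      simpa only [mul_pow, hζ, hζ', one_mul, ← pow_mul, mul_comm m, mul_comm m'] using this
    rw [hfin.pow_eq_pow_iff_modEq, hord] at hpow
    obtain rfl : m = m' := (Nat.ModEq.mul_left_cancel' hn.ne' hpow).eq_of_lt_of_lt hm hm'
    have hgc : g ^ m * c ≠ 0 := mul_ne_zero (pow_ne_zero _ hg0) hc
    exact Prod.ext (mul_right_cancel₀ hgc h) rfl
  · intro x hx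
    obtain ⟨k, hk⟩ := hg (x * c⁻¹) (mul_ne_zero hx (inv_ne_zero hc))
    refine ⟨(g ^ (t * (k / t)), g ^ (k % t) * c), ⟨?_, k % t, Nat.mod_lt _ ht, rfl⟩, ?_⟩
    · rw [mem_ofPred_eq, ← pow_mul, mul_right_comm, mul_comm t, pow_mul, ← hord,
        pow_orderOf_eq_one, one_pow]
    · simp only [← mul_assoc, ← pow_add, Nat.div_add_mod, hk, inv_mul_cancel_right₀ hc]

section CubeRoots

variable {F : Type*} [Field F] {ω ζ : F}

theorem mem_cubeRoots_iff (hω : IsPrimitiveRoot ω 3) :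
    ζ ∈ ({1, ω, ω ^ 2} : Set F) ↔ ζ ^ 3 = 1 := by
  refine ⟨?_, fun h ↦ ?_⟩
  · rintro (rfl | rfl | rfl)
    · exact one_pow 3
    · exact hω.pow_eq_one
    · rw [← pow_mul, mul_comm, pow_mul, hω.pow_eq_one, one_pow]
  · obtain ⟨i, hi, rfl⟩ := hω.eq_pow_of_pow_eq_one h
    interval_cases i <;> simp

theorem ncard_cubeRoots (hω : IsPrimitiveRoot ω 3) : ({1, ω, ω ^ 2} : Set F).ncard = 3 := by
  have hinj {i j : ℕ} (hi : i < 3) (hj : j < 3) (hij : i ≠ j) : ω ^ i ≠ ω ^ j :=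
    fun h ↦ hij (hω.pow_inj hi hj h)
  refine ncard_eq_three.2 ⟨1, ω, ω ^ 2, ?_, ?_, ?_, rfl⟩
  · simpa using hinj (i := 0) (j := 1) (by norm_num) (by norm_num) (by norm_num)
  · simpa using hinj (i := 0) (j := 2) (by norm_num) (by norm_num) (by norm_num)
  · simpa using hinj (i := 1) (j := 2) (by norm_num) (by norm_num) (by norm_num)

def cubeRootCosets (ω : F) : Set (Set F) := {{1, ω, ω ^ 2}, -{1, ω, ω ^ 2}}

theorem sUnion_cubeRootCosets (hω : IsPrimitiveRoot ω 3) :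
    ⋃₀ cubeRootCosets ω = {ζ : F | ζ ^ 6 = 1} := by
  ext ζ
  rw [cubeRootCosets, sUnion_pair, mem_union, mem_neg, mem_cubeRoots_iff hω,
    mem_cubeRoots_iff hω, Odd.neg_pow (by decide), neg_eq_iff_eq_neg, ← mul_self_eq_one_iff,
    ← pow_add]
  rfl

theorem ncard_of_mem_cubeRootCosets (hω : IsPrimitiveRoot ω 3) :
    ∀ P ∈ cubeRootCosets ω, P.ncard = 3 := by
  rintro P (rfl | rfl)
  · exact ncard_cubeRoots hω
  · rw [ncard_neg, ncard_cubeRoots hω]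

theorem pairwiseDisjoint_cubeRootCosets (hω : IsPrimitiveRoot ω 3) (h : (-1 : F) ≠ 1) :
    (cubeRootCosets ω).PairwiseDisjoint id := by
  have hdisj : Disjoint ({1, ω, ω ^ 2} : Set F) (-{1, ω, ω ^ 2}) := by
    refine disjoint_left.2 fun ζ hζ hζ' ↦ h ?_
    rw [mem_neg, mem_cubeRoots_iff hω] at hζ'
    rw [mem_cubeRoots_iff hω] at hζ
    rwa [Odd.neg_pow (by decide), hζ] at hζ'
  exact pairwise_pair.2 fun _ ↦ ⟨hdisj, hdisj.symm⟩

end CubeRoots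

section Twist

variable {F L : Type*} [Field F] [AddCommGroup L] [Module F L]

def twist (u : L) (ζ : F) (v : L) : L := ζ⁻¹ • u + ζ • v

theorem twist_neg (u v : L) (ζ : F) : twist u (-ζ) v = -twist u ζ v := by
  simp only [twist, inv_neg, neg_smul, neg_add]

theorem image_twist_cubeRoots {ω : F} (hω : ω ^ 3 = 1) (u v : L) :
    (twist u · v) '' {1, ω, ω ^ 2} = Ttriple ω u v := by
  have hω0 : ω ≠ 0 := by rintro rfl; norm_num at hω
  have hinv : ω⁻¹ = ω ^ 2 := inv_eq_of_mul_eq_one_right (by rw [← pow_succ']; exact hω)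
  have hinv2 : (ω ^ 2)⁻¹ = ω := by rw [← hinv, inv_inv]
  simp only [image_insert_eq, image_singleton, twist, inv_one, one_smul, hinv, hinv2, Ttriple]
  rw [pair_comm]

theorem image_twist_neg (u v : L) (P : Set F) : (twist u · v) '' (-P) = -((twist u · v) '' P) := by
  rw [← image_neg_eq_neg, ← image_neg_eq_neg, image_image, image_image]
  simp only [twist_neg]

theorem imageBlocks_twist_cubeRootCosets {ω : F} (hω : ω ^ 3 = 1) (u : L) (V : Set L) :
    imageBlocks (twist u) (cubeRootCosets ω) V =
      {S | ∃ v ∈ V, S = Ttriple ω u v ∨ S = -Ttriple ω u v} := by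
  ext S
  simp only [imageBlocks, cubeRootCosets, mem_insert_iff, mem_singleton_iff, exists_eq_or_imp,
    exists_eq_left, image_twist_neg, image_twist_cubeRoots hω]

theorem map_twist (φ : L →ₗ[F] F) {u : L} (hu : φ u = 0) (ζ : F) (v : L) :
    φ (twist u ζ v) = ζ * φ v := by
  simp [twist, hu]

theorem bijOn_twist {φ : L →ₗ[F] F} {u : L} (hker : LinearMap.ker φ = Submodule.span F {u})
    {M C : Set F} (hMC : BijOn (fun p : F × F ↦ p.1 * p.2) (M ×ˢ C) {x | x ≠ 0}) :
    BijOn (uncurry (twist u)) (M ×ˢ (φ ⁻¹' C)) (Submodule.span F {u} : Set L)ᶜ := by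
  have hu : φ u = 0 := by
    rw [← LinearMap.mem_ker, hker]; exact Submodule.mem_span_singleton_self u
  have hmem (x : L) : x ∉ Submodule.span F {u} ↔ φ x ≠ 0 := by
    rw [← hker, LinearMap.mem_ker]
  refine ⟨?_, ?_, ?_⟩
  · rintro ⟨ζ, v⟩ hp
    simpa [hmem, map_twist φ hu] using hMC.mapsTo (x := (ζ, φ v)) hp
  · rintro ⟨ζ, v⟩ hp ⟨ζ', v'⟩ hp' h
    have hζ : ζ ≠ 0 := left_ne_zero_of_mul (hMC.mapsTo (x := (ζ, φ v)) hp)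
    obtain ⟨rfl, -⟩ := Prod.ext_iff.1 (hMC.injOn (x₁ := (ζ, φ v)) (x₂ := (ζ', φ v')) hp hp'
      (by simpa [map_twist φ hu] using congrArg φ h))
    simpa [twist, hζ] using h
  · intro x hx
    obtain ⟨⟨ζ, a⟩, ⟨hζM, haC⟩, hζa⟩ := hMC.surjOn ((hmem x).1 hx)
    have hζ : ζ ≠ 0 := left_ne_zero_of_mul (hMC.mapsTo ⟨hζM, haC⟩)
    refine ⟨(ζ, ζ⁻¹ • (x - ζ⁻¹ • u)), ⟨hζM, ?_⟩, ?_⟩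
    · simpa [hu, ← hζa, hζ] using haC
    · simp [twist, smul_smul, hζ]

end Twist

theorem LinearMap.ker_eq_span_singleton_of_finrank_eq_two {F L : Type*} [Field F] [AddCommGroup L]
    [Module F L] (hdim : Module.finrank F L = 2) {φ : Module.Dual F L} (hφ : φ ≠ 0) {u : L}
    (hu : u ≠ 0) (hφu : φ u = 0) : LinearMap.ker φ = Submodule.span F {u} := by
  have : FiniteDimensional F L := .of_finrank_pos (by omega)
  refine (Submodule.eq_of_le_of_finrank_eq ?_ ?_).symm
  · rwa [Submodule.span_singleton_le_iff_mem]
  · have := Module.Dual.finrank_ker_add_one_of_ne_zero hφ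
    rw [finrank_span_singleton hu]; omega

theorem ncard_compl_span_singleton {F L : Type*} [Field F] [Fintype F] [AddCommGroup L]
    [Module F L] [FiniteDimensional F L] {u : L} (hu : u ≠ 0) :
    ((Submodule.span F {u} : Set L)ᶜ).ncard =
      Fintype.card F ^ Module.finrank F L - Fintype.card F := by
  classical
  have : Fintype L := @Fintype.ofFinite L (Module.finite_of_finite F)
  rw [ncard_compl, ← Nat.card_coe_set_eq, SetLike.coe_sort_coe, Nat.card_eq_fintype_card,
    Nat.card_eq_fintype_card, Module.card_eq_pow_finrank (K := F),
    Module.card_eq_pow_finrank (K := F) (V := Submodule.span F {u}), finrank_span_singleton hu,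
    pow_one]

/-- Lemma 2.2: on a 2-dimensional space `L` with a nondegenerate alternating form
`f`, a fixed nonzero `u` (spanning `K`) and `c ≠ 0`, the `q(q-1)/3` triples
`±T(u,v)` with `f(u,v) ∈ {gᵐc : 0 ≤ m < t}` partition `L ∖ K`. -/
theorem partial_parallel_class_partition (F : Type*) [Field F] [Fintype F]
    (t : ℕ) (hq : Fintype.card F = 6 * t + 1)
    (g : F) (hg : ∀ x : F, x ≠ 0 → ∃ k : ℕ, g ^ k = x)
    (L : Type*) [AddCommGroup L] [Module F L] (hdim : Module.finrank F L = 2)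
    (f : L →ₗ[F] L →ₗ[F] F) (halt : ∀ x, f x x = 0)
    (hnd : ∀ x, (∀ y, f x y = 0) → x = 0)
    (u : L) (hu : u ≠ 0) (c : F) (hc : c ≠ 0) :
    ∀ 𝒯 : Set (Set L),
      𝒯 = {S | ∃ v : L, (∃ m < t, f u v = g ^ m * c) ∧
        (S = Ttriple (g ^ (2 * t)) u v ∨ S = -Ttriple (g ^ (2 * t)) u v)} →
      𝒯.ncard = Fintype.card F * (Fintype.card F - 1) / 3 ∧
      (∀ S ∈ 𝒯, S.ncard = 3) ∧
      𝒯.PairwiseDisjoint id ∧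
      ⋃₀ 𝒯 = {x : L | x ∉ Submodule.span F {u}} := by
  intro 𝒯 h𝒯
  have : FiniteDimensional F L := .of_finrank_pos (by omega)
  have : Finite L := Module.finite_of_finite F
  have ht : 0 < t := by have := Fintype.one_lt_card (α := F); omega
  have hneg : (-1 : F) ≠ 1 :=
    Ring.neg_one_ne_one_of_char_ne_two (by rw [Ne, FiniteField.even_card_iff_char_two]; omega)
  have hg0 : g ≠ 0 := ne_zero_of_forall_pow_eq (neg_ne_zero.2 one_ne_zero) hneg hg
  have hord : orderOf g = 6 * t := by rw [orderOf_eq_card_sub_one hg0 hg, hq]; rfl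
  have hω : IsPrimitiveRoot (g ^ (2 * t)) 3 :=
    (hord ▸ IsPrimitiveRoot.orderOf g).pow (by omega) (by ring)
  have hker : LinearMap.ker (f u) = Submodule.span F {u} :=
    LinearMap.ker_eq_span_singleton_of_finrank_eq_two hdim
      (fun h ↦ hu (hnd u fun y ↦ by rw [h, LinearMap.zero_apply])) hu (halt u)
  set V : Set L := f u ⁻¹' {y | ∃ m < t, y = g ^ m * c}
  have hbij : BijOn (uncurry (twist u)) (⋃₀ cubeRootCosets (g ^ (2 * t)) ×ˢ V)
      (Submodule.span F {u} : Set L)ᶜ := by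
    rw [sUnion_cubeRootCosets hω]
    exact bijOn_twist hker (bijOn_mul_setOf_pow_eq_one (by norm_num) ht hord hg hc)
  have hblocks : 𝒯 = imageBlocks (twist u) (cubeRootCosets (g ^ (2 * t))) V :=
    h𝒯.trans (imageBlocks_twist_cubeRootCosets hω.pow_eq_one u V).symm
  have hsize : ∀ S ∈ 𝒯, S.ncard = 3 :=
    hblocks ▸ ncard_of_mem_imageBlocks hbij.injOn (ncard_of_mem_cubeRootCosets hω)
  have hdisj : 𝒯.PairwiseDisjoint id :=
    hblocks ▸ pairwiseDisjoint_imageBlocks (pairwiseDisjoint_cubeRootCosets hω hneg) hbij.injOn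
  have hunion : ⋃₀ 𝒯 = {x : L | x ∉ Submodule.span F {u}} := by
    rw [hblocks, sUnion_imageBlocks, hbij.image_eq]
    rfl
  refine ⟨?_, hsize, hdisj, hunion⟩
  have hcompl : (⋃₀ 𝒯).ncard = Fintype.card F ^ 2 - Fintype.card F := by
    rw [hunion, ← hdim]
    exact ncard_compl_span_singleton hu
  rw [Nat.mul_sub_one, ← sq, ← hcompl, ncard_sUnion_of_pairwiseDisjoint hdisj hsize,
    Nat.mul_div_cancel_left _ (by norm_num)]
end

section
/- Let q = 6t+1 be a prime power and W = F_q^n with n ≥ 2. Fix: a primitive root g of F_q with ω = g^{2t}; for each 2-dimensional subspace L of W a nondegenerate alternating bilinear form f_L on L; and for each 1-dimensional subspace K of W a chosen generator. For a nonzero u ∈ W and c ∈ F_q^*, define P_{u,c} as the set of triples ±T(u,v) over all 2-dimensional subspaces L containing span(u) and all v ∈ L with f_L(u,v) ∈ {g^m c : 0 ≤ m < t}. Then P_{u,c} is a partition of W ∖ span(u) into 3-element sets. -/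
/-- The partial parallel class `P_{u,c}`: all triples `±T(u,v)` over 2-dimensional
subspaces `L ∋ u` and `v ∈ L` with `f_L(u,v) ∈ {gᵐc : 0 ≤ m < t}`. -/
def Pclass {F : Type*} [Field F] {W : Type*} [AddCommGroup W] [Module F W]
    (t : ℕ) (g : F) (f : (L : Submodule F W) → L →ₗ[F] L →ₗ[F] F)
    (u : W) (c : F) : Set (Set W) :=
  {S | ∃ (L : Submodule F W) (huL : u ∈ L), Module.finrank F L = 2 ∧
    ∃ v : L, (∃ m < t, f L ⟨u, huL⟩ v = g ^ m * c) ∧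
      (S = Ttriple (g ^ (2 * t)) u (v : W) ∨
       S = -Ttriple (g ^ (2 * t)) u (v : W))}

/-!
Put `ζ = g ^ t`, a primitive sixth root of unity with `ω = ζ ^ 2`. A vector `w` lies in
`T(u,v) ∪ -T(u,v)` iff `v = ε w - ε² u` for a sixth root of unity `ε`, the sign being that of `ε³`.
For `w ∉ span(u)` the only admissible plane is `L = span(u, w)`, where `f_L(u, v) = ε f_L(u, w)`
with `f_L(u, w) ≠ 0`. As `F^*` is the disjoint union of the sets `ε {gᵐ c : m < t}` over the sixth
roots of unity `ε`, exactly one `ε` makes `v` admissible, so `w` lies in exactly one triple.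
-/

open Module Submodule

section Ttriple

variable {F W : Type*} [Field F] [AddCommGroup W] [Module F W] {ω : F} {u v w : W}

theorem mem_Ttriple_iff (hω : IsPrimitiveRoot ω 3) :
    w ∈ Ttriple ω u v ↔ ∃ ε : F, ε ^ 3 = 1 ∧ v = ε • w - ε ^ 2 • u := by
  have hω3 := hω.pow_eq_one
  simp only [Ttriple, Set.mem_insert_iff, Set.mem_singleton_iff]
  constructor
  · rintro (rfl | rfl | rfl)
    · exact ⟨1, one_pow _, by module⟩
    · exact ⟨ω, hω3, by linear_combination (norm := module) hω3 • (-v)⟩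
    · refine ⟨ω ^ 2, by linear_combination (ω ^ 3 + 1) * hω3, ?_⟩
      linear_combination (norm := module) hω3 • (-v)
  · rintro ⟨ε, hε, rfl⟩
    obtain ⟨i, hi, rfl⟩ := hω.eq_pow_of_pow_eq_one hε
    interval_cases i
    · left; module
    · right; left; linear_combination (norm := module) hω3 • (ω • u - w)
    · right; right; linear_combination (norm := module) hω3 • (ω ^ 2 • u - w)

theorem mem_neg_Ttriple_iff (hω : IsPrimitiveRoot ω 3) :
    w ∈ -Ttriple ω u v ↔ ∃ ε : F, ε ^ 3 = -1 ∧ v = ε • w - ε ^ 2 • u := by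
  rw [Set.mem_neg, mem_Ttriple_iff hω]
  constructor <;> rintro ⟨ε, hε, rfl⟩ <;> exact ⟨-ε, by linear_combination -hε, by module⟩

theorem mem_Ttriple_union_neg_iff (hω : IsPrimitiveRoot ω 3) :
    w ∈ Ttriple ω u v ∪ -Ttriple ω u v ↔ ∃ ε : F, ε ^ 6 = 1 ∧ v = ε • w - ε ^ 2 • u := by
  simp only [Set.mem_union, mem_Ttriple_iff hω, mem_neg_Ttriple_iff hω, ← exists_or,
    ← or_and_right]
  have (ε : F) : ε ^ 3 = 1 ∨ ε ^ 3 = -1 ↔ ε ^ 6 = 1 := by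
    rw [← mul_self_eq_one_iff, ← pow_add]
  simp only [this]

theorem mem_span_of_mem_Ttriple_of_mem_neg (hω : IsPrimitiveRoot ω 3) (hF : (-1 : F) ≠ 1)
    (h₁ : w ∈ Ttriple ω u v) (h₂ : w ∈ -Ttriple ω u v) : w ∈ span F {u} := by
  obtain ⟨ε₁, hε₁, rfl⟩ := (mem_Ttriple_iff hω).mp h₁
  obtain ⟨ε₂, hε₂, hv⟩ := (mem_neg_Ttriple_iff hω).mp h₂
  have hne : ε₁ - ε₂ ≠ 0 := sub_ne_zero.mpr fun h => hF (by rw [← hε₂, ← h, hε₁])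
  have : w = (ε₁ + ε₂) • u := by
    apply smul_right_injective W hne
    linear_combination (norm := module) hv
  exact mem_span_singleton.mpr ⟨_, this.symm⟩

theorem Ttriple_ncard (hω : IsPrimitiveRoot ω 3) (h : LinearIndependent F ![u, v]) :
    (Ttriple ω u v).ncard = 3 := by
  have hp := LinearIndependent.pair_iff.mp h
  have hω1 : ω ≠ 1 := hω.ne_one (by norm_num)
  have hω2 : ω ^ 2 ≠ 1 := (hω.pow_of_coprime 2 (by norm_num)).ne_one (by norm_num)
  have h₁ : u + v ≠ ω • u + ω ^ 2 • v := fun he =>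
    hω1 (sub_eq_zero.mp (hp (1 - ω) (1 - ω ^ 2) (by linear_combination (norm := module) he)).1).symm
  have h₂ : u + v ≠ ω ^ 2 • u + ω • v := fun he =>
    hω2 (sub_eq_zero.mp (hp (1 - ω ^ 2) (1 - ω) (by linear_combination (norm := module) he)).1).symm
  have h₃ : ω • u + ω ^ 2 • v ≠ ω ^ 2 • u + ω • v := fun he => by
    have := (hp (ω - ω ^ 2) (ω ^ 2 - ω) (by linear_combination (norm := module) he)).1
    exact hω1 (by linear_combination (1 + ω) * this + hω.pow_eq_one)
  rw [Ttriple, Set.ncard_insert_of_notMem (by simp [h₁, h₂]), Set.ncard_pair h₃]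

end Ttriple

section SixthRoots

variable {F : Type*} [Field F] {g c d ε₁ ε₂ : F} {t m₁ m₂ : ℕ}

theorem eq_of_mul_eq_pow_mul_of_pow_six_eq_one (hg : IsPrimitiveRoot g (6 * t)) (hc : c ≠ 0)
    (hε₁ : ε₁ ^ 6 = 1) (hε₂ : ε₂ ^ 6 = 1) (hm₁ : m₁ < t) (hm₂ : m₂ < t)
    (h₁ : ε₁ * d = g ^ m₁ * c) (h₂ : ε₂ * d = g ^ m₂ * c) : ε₁ = ε₂ := by
  have hcross : ε₁ * g ^ m₂ = ε₂ * g ^ m₁ :=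
    mul_right_cancel₀ hc (by linear_combination ε₂ * h₁ - ε₁ * h₂)
  have hpow : g ^ (m₂ * 6) = g ^ (m₁ * 6) := by
    rw [pow_mul, pow_mul, ← one_mul ((g ^ m₂) ^ 6), ← hε₁, ← mul_pow, hcross, mul_pow, hε₂,
      one_mul]
  obtain rfl : m₁ = m₂ := by
    have := hg.pow_inj (by omega) (by omega) hpow
    omega
  exact mul_right_cancel₀ (pow_ne_zero _ (hg.ne_zero (by omega))) hcross

theorem exists_pow_six_eq_one_mul_eq_pow_mul (hg : IsPrimitiveRoot g (6 * t)) (ht : 0 < t)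
    (hgen : ∀ x : F, x ≠ 0 → ∃ k : ℕ, g ^ k = x) (hd : d ≠ 0) (hc : c ≠ 0) :
    ∃ ε : F, ε ^ 6 = 1 ∧ ∃ m < t, ε * d = g ^ m * c := by
  obtain ⟨k, hk⟩ := hgen (d / c) (div_ne_zero hd hc)
  have hg0 : g ≠ 0 := hg.ne_zero (by omega)
  refine ⟨(g ^ (t * (k / t)))⁻¹, ?_, k % t, Nat.mod_lt _ ht, ?_⟩
  · rw [inv_pow, ← pow_mul, show t * (k / t) * 6 = 6 * t * (k / t) by ring, pow_mul,
      hg.pow_eq_one, one_pow, inv_one]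
  · have hd' : d = g ^ (t * (k / t)) * (g ^ (k % t) * c) := by
      rw [← mul_assoc, ← pow_add, Nat.div_add_mod, hk, div_mul_cancel₀ d hc]
    rw [hd', inv_mul_cancel_left₀ (pow_ne_zero _ hg0)]

theorem isPrimitiveRoot_card_sub_one_of_forall_exists_pow_eq [Fintype F]
    (hF : 2 < Fintype.card F) (hgen : ∀ x : F, x ≠ 0 → ∃ k : ℕ, g ^ k = x) :
    IsPrimitiveRoot g (Fintype.card F - 1) := by
  classical
  have hg0 : g ≠ 0 := by
    obtain ⟨x, -, hx⟩ := Finset.exists_mem_notMem_of_card_lt_card (s := {0, 1})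
      (t := Finset.univ) ((Finset.card_le_two).trans_lt hF)
    simp only [Finset.mem_insert, Finset.mem_singleton, not_or] at hx
    obtain ⟨k, rfl⟩ := hgen x hx.1
    rintro rfl
    rcases k with _ | k
    · exact hx.2 (pow_zero _)
    · exact hx.1 (zero_pow k.succ_ne_zero)
  rw [IsPrimitiveRoot.iff_orderOf, show g = (Units.mk0 g hg0 : F) from rfl, orderOf_units,
    orderOf_eq_card_of_forall_mem_powers, Nat.card_eq_fintype_card, Fintype.card_units]
  intro x
  obtain ⟨k, hk⟩ := hgen x x.ne_zero
  exact ⟨k, Units.ext (by simpa using hk)⟩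

theorem IsPrimitiveRoot.neg_one_ne_one {k : ℕ} (hg : IsPrimitiveRoot g k) (hk : Even k)
    (hk0 : k ≠ 0) : (-1 : F) ≠ 1 := by
  obtain ⟨j, rfl⟩ := hk
  have h2 : IsPrimitiveRoot (g ^ j) 2 := hg.pow (by omega) (by ring)
  exact h2.eq_neg_one_of_two_right ▸ h2.ne_one one_lt_two

end SixthRoots

section Bilinear

variable {F V : Type*} [Field F] [AddCommGroup V] [Module F V] {B : V →ₗ[F] V →ₗ[F] F} {x y : V}

theorem linearIndependent_pair_of_notMem_span_singleton (hx : x ≠ 0) (hy : y ∉ span F {x}) :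
    LinearIndependent F ![x, y] :=
  (LinearIndependent.pair_iff' hx).mpr fun a h => hy (mem_span_singleton.mpr ⟨a, h⟩)

theorem LinearMap.apply_smul_sub_smul_self (hB : ∀ z, B z z = 0) (a b : F) :
    B x (a • y - b • x) = a * B x y := by
  simp [hB]

theorem LinearMap.apply_eq_zero_of_mem_span_singleton (hB : ∀ z, B z z = 0)
    (h : y ∈ span F {x}) : B x y = 0 := by
  obtain ⟨a, rfl⟩ := mem_span_singleton.mp h
  simp [hB]

theorem LinearMap.apply_ne_zero_of_notMem_span_singleton (hB : ∀ z, B z z = 0)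
    (hnd : ∀ z, (∀ z', B z z' = 0) → z = 0) (hV : finrank F V = 2) (hx : x ≠ 0)
    (hy : y ∉ span F {x}) : B x y ≠ 0 := by
  intro hxy
  have : FiniteDimensional F V := Module.finite_of_finrank_eq_succ hV
  have htop := (linearIndependent_pair_of_notMem_span_singleton hx hy)
    |>.span_eq_top_of_card_eq_finrank' (by simp [hV])
  have hker : span F (Set.range ![x, y]) ≤ LinearMap.ker (B x) := by
    rw [span_le, Set.range_subset_iff]
    intro i
    fin_cases i
    exacts [hB x, hxy]
  refine hx (hnd x fun z => ?_)
  exact hker (htop ▸ mem_top : z ∈ span F (Set.range ![x, y]))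

end Bilinear

section Plane

variable {F W : Type*} [Field F] [AddCommGroup W] [Module F W] {u w : W}

theorem Submodule.coe_mem_span_singleton_iff {L : Submodule F W} {x y : L} :
    (y : W) ∈ span F {(x : W)} ↔ y ∈ span F {x} := by
  simpa using apply_mem_span_image_iff_mem_span L.injective_subtype (x := y) (s := {x})

theorem finrank_span_pair (hu : u ≠ 0) (hw : w ∉ span F {u}) :
    finrank F (span F {u, w}) = 2 := by
  rw [← Matrix.range_cons_cons_empty u w ![],
    finrank_span_eq_card (linearIndependent_pair_of_notMem_span_singleton hu hw), Fintype.card_fin]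

theorem Submodule.eq_span_pair_of_finrank_eq_two {L : Submodule F W} (hL : finrank F L = 2)
    (huL : u ∈ L) (hwL : w ∈ L) (hu : u ≠ 0) (hw : w ∉ span F {u}) : L = span F {u, w} := by
  have : FiniteDimensional F L := Module.finite_of_finrank_eq_succ hL
  refine (eq_of_le_of_finrank_eq ?_ (by rw [hL, finrank_span_pair hu hw])).symm
  rw [span_le]
  rintro z (rfl | rfl)
  exacts [huL, hwL]

end Plane

section Pclass

variable {F W : Type*} [Field F] [AddCommGroup W] [Module F W] {t : ℕ} {g c : F}
  {f : (L : Submodule F W) → L →ₗ[F] L →ₗ[F] F} {u w : W} {S S₁ S₂ : Set W}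

theorem exists_of_mem_Pclass (hg : IsPrimitiveRoot g (6 * t))
    (halt : ∀ L : Submodule F W, finrank F L = 2 → ∀ x, f L x x = 0)
    (hS : S ∈ Pclass t g f u c) (hw : w ∈ S) :
    ∃ (L : Submodule F W) (huL : u ∈ L) (hwL : w ∈ L), finrank F L = 2 ∧
      ∃ ε : F, ε ^ 6 = 1 ∧ (∃ m < t, ε * f L ⟨u, huL⟩ ⟨w, hwL⟩ = g ^ m * c) ∧
        (S = Ttriple (g ^ (2 * t)) u (ε • w - ε ^ 2 • u) ∨
          S = -Ttriple (g ^ (2 * t)) u (ε • w - ε ^ 2 • u)) := by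
  obtain ⟨L, huL, hL, v, ⟨m, hm, hfv⟩, hSv⟩ := hS
  have hω : IsPrimitiveRoot (g ^ (2 * t)) 3 := hg.pow (by omega) (by ring)
  have hwv : w ∈ Ttriple (g ^ (2 * t)) u v ∪ -Ttriple (g ^ (2 * t)) u v := by
    rcases hSv with rfl | rfl
    exacts [Or.inl hw, Or.inr hw]
  obtain ⟨ε, hε, hv⟩ := (mem_Ttriple_union_neg_iff hω).mp hwv
  have hwL : w ∈ L := by
    have hε0 : ε ≠ 0 := by rintro rfl; norm_num at hε
    rw [← L.smul_mem_iff hε0, show ε • w = v + ε ^ 2 • u by rw [hv, sub_add_cancel]]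
    exact L.add_mem v.2 (L.smul_mem _ huL)
  have hvL : v = ε • (⟨w, hwL⟩ : L) - ε ^ 2 • ⟨u, huL⟩ := Subtype.ext hv
  refine ⟨L, huL, hwL, hL, ε, hε, ⟨m, hm, ?_⟩, hv ▸ hSv⟩
  rw [← hfv, hvL, LinearMap.apply_smul_sub_smul_self (halt L hL)]

theorem notMem_span_of_mem_Pclass (hg : IsPrimitiveRoot g (6 * t))
    (halt : ∀ L : Submodule F W, finrank F L = 2 → ∀ x, f L x x = 0) (hc : c ≠ 0)
    (hS : S ∈ Pclass t g f u c) (hw : w ∈ S) : w ∉ span F {u} := by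
  obtain ⟨L, huL, hwL, hL, ε, -, ⟨m, hm, hf⟩, -⟩ := exists_of_mem_Pclass hg halt hS hw
  intro hwu
  have hzero : f L ⟨u, huL⟩ ⟨w, hwL⟩ = 0 :=
    LinearMap.apply_eq_zero_of_mem_span_singleton (halt L hL) (coe_mem_span_singleton_iff.mp hwu)
  rw [hzero, mul_zero] at hf
  exact mul_ne_zero (pow_ne_zero _ (hg.ne_zero (by omega))) hc hf.symm

theorem ncard_of_mem_Pclass (hg : IsPrimitiveRoot g (6 * t))
    (halt : ∀ L : Submodule F W, finrank F L = 2 → ∀ x, f L x x = 0) (hc : c ≠ 0) (hu : u ≠ 0)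
    (hS : S ∈ Pclass t g f u c) : S.ncard = 3 := by
  obtain ⟨L, huL, hL, v, ⟨m, hm, hfv⟩, hSv⟩ := hS
  have hω : IsPrimitiveRoot (g ^ (2 * t)) 3 := hg.pow (by omega) (by ring)
  have hv : (v : W) ∉ span F {u} := by
    intro hvu
    rw [LinearMap.apply_eq_zero_of_mem_span_singleton (halt L hL)
      (coe_mem_span_singleton_iff (x := ⟨u, huL⟩) |>.mp hvu)] at hfv
    exact mul_ne_zero (pow_ne_zero _ (hg.ne_zero (by omega))) hc hfv.symm
  have hli := linearIndependent_pair_of_notMem_span_singleton hu hv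
  rcases hSv with rfl | rfl
  · exact Ttriple_ncard hω hli
  · rw [Set.ncard_neg]
    exact Ttriple_ncard hω hli

theorem eq_of_mem_Pclass (hg : IsPrimitiveRoot g (6 * t))
    (halt : ∀ L : Submodule F W, finrank F L = 2 → ∀ x, f L x x = 0) (hc : c ≠ 0) (hu : u ≠ 0)
    (hS₁ : S₁ ∈ Pclass t g f u c) (hS₂ : S₂ ∈ Pclass t g f u c) (hw₁ : w ∈ S₁) (hw₂ : w ∈ S₂) :
    S₁ = S₂ := by
  have hwu := notMem_span_of_mem_Pclass hg halt hc hS₁ hw₁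
  obtain ⟨L₁, huL₁, hwL₁, hL₁, ε₁, hε₁, ⟨m₁, hm₁, hf₁⟩, hS₁⟩ := exists_of_mem_Pclass hg halt hS₁ hw₁
  obtain ⟨L₂, huL₂, hwL₂, hL₂, ε₂, hε₂, ⟨m₂, hm₂, hf₂⟩, hS₂⟩ := exists_of_mem_Pclass hg halt hS₂ hw₂
  obtain rfl : L₁ = L₂ := (eq_span_pair_of_finrank_eq_two hL₁ huL₁ hwL₁ hu hwu).trans
    (eq_span_pair_of_finrank_eq_two hL₂ huL₂ hwL₂ hu hwu).symm
  obtain rfl : ε₁ = ε₂ := eq_of_mul_eq_pow_mul_of_pow_six_eq_one hg hc hε₁ hε₂ hm₁ hm₂ hf₁ hf₂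
  have hω : IsPrimitiveRoot (g ^ (2 * t)) 3 := hg.pow (by omega) (by ring)
  have hF : (-1 : F) ≠ 1 := hg.neg_one_ne_one ⟨3 * t, by ring⟩ (by omega)
  rcases hS₁ with rfl | rfl <;> rcases hS₂ with rfl | rfl
  · rfl
  · exact absurd (mem_span_of_mem_Ttriple_of_mem_neg hω hF hw₁ hw₂) hwu
  · exact absurd (mem_span_of_mem_Ttriple_of_mem_neg hω hF hw₂ hw₁) hwu
  · rfl

theorem exists_mem_Pclass (hg : IsPrimitiveRoot g (6 * t)) (ht : 0 < t)
    (hgen : ∀ x : F, x ≠ 0 → ∃ k : ℕ, g ^ k = x)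
    (halt : ∀ L : Submodule F W, finrank F L = 2 → ∀ x, f L x x = 0)
    (hnd : ∀ L : Submodule F W, finrank F L = 2 → ∀ x, (∀ y, f L x y = 0) → x = 0)
    (hc : c ≠ 0) (hu : u ≠ 0) (hw : w ∉ span F {u}) : ∃ S ∈ Pclass t g f u c, w ∈ S := by
  set L := span F {u, w}
  have huL : u ∈ L := subset_span (by simp)
  have hwL : w ∈ L := subset_span (by simp)
  have hL : finrank F L = 2 := finrank_span_pair hu hw
  have hd : f L ⟨u, huL⟩ ⟨w, hwL⟩ ≠ 0 :=
    LinearMap.apply_ne_zero_of_notMem_span_singleton (halt L hL) (hnd L hL) hL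
      (fun h => hu (congrArg Subtype.val h)) (coe_mem_span_singleton_iff.not.mp hw)
  obtain ⟨ε, hε, m, hm, hfε⟩ := exists_pow_six_eq_one_mul_eq_pow_mul hg ht hgen hd hc
  set v : L := ε • ⟨w, hwL⟩ - ε ^ 2 • ⟨u, huL⟩
  have hfv : f L ⟨u, huL⟩ v = g ^ m * c := by
    rw [LinearMap.apply_smul_sub_smul_self (halt L hL), hfε]
  have hω : IsPrimitiveRoot (g ^ (2 * t)) 3 := hg.pow (by omega) (by ring)
  rcases (mem_Ttriple_union_neg_iff hω (v := (v : W))).mpr ⟨ε, hε, rfl⟩ with h | h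
  · exact ⟨_, ⟨L, huL, hL, v, ⟨m, hm, hfv⟩, Or.inl rfl⟩, h⟩
  · exact ⟨_, ⟨L, huL, hL, v, ⟨m, hm, hfv⟩, Or.inr rfl⟩, h⟩

end Pclass

theorem Pclass_partition_general (F : Type*) [Field F] [Fintype F]
    (t : ℕ) (hq : Fintype.card F = 6 * t + 1)
    (g : F) (hg : ∀ x : F, x ≠ 0 → ∃ k : ℕ, g ^ k = x)
    (n : ℕ)
    (f : (L : Submodule F (Fin n → F)) → L →ₗ[F] L →ₗ[F] F)
    (halt : ∀ L : Submodule F (Fin n → F), Module.finrank F L = 2 → ∀ x, f L x x = 0)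
    (hnd : ∀ L : Submodule F (Fin n → F), Module.finrank F L = 2 → ∀ x, (∀ y, f L x y = 0) → x = 0)
    (u : Fin n → F) (hu : u ≠ 0) (c : F) (hc : c ≠ 0) :
    (∀ S ∈ Pclass t g f u c, S.ncard = 3) ∧
    (Pclass t g f u c).PairwiseDisjoint id ∧
    ⋃₀ Pclass t g f u c = {x : Fin n → F | x ∉ Submodule.span F {u}} := by
  have ht : 0 < t := by
    have := Fintype.one_lt_card (α := F)
    omega
  have hprim : IsPrimitiveRoot g (6 * t) := by
    simpa [hq] using isPrimitiveRoot_card_sub_one_of_forall_exists_pow_eq (by omega) hg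
  refine ⟨fun S hS => ncard_of_mem_Pclass hprim halt hc hu hS,
    fun S₁ hS₁ S₂ hS₂ hne => Set.disjoint_left.mpr fun w hw₁ hw₂ =>
      hne (eq_of_mem_Pclass hprim halt hc hu hS₁ hS₂ hw₁ hw₂),
    Set.ext fun w => ⟨?_, fun hw => ?_⟩⟩
  · rintro ⟨S, hS, hw⟩
    exact notMem_span_of_mem_Pclass hprim halt hc hS hw
  · exact exists_mem_Pclass hprim ht hg halt hnd hc hu hw

/-- `P_{u,c}` is a partition of `W ∖ span(u)` into 3-element sets. -/
theorem Pclass_partition (F : Type*) [Field F] [Fintype F]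
    (t : ℕ) (hq : Fintype.card F = 6 * t + 1)
    (g : F) (hg : ∀ x : F, x ≠ 0 → ∃ k : ℕ, g ^ k = x)
    (n : ℕ) (hn : 2 ≤ n)
    (f : (L : Submodule F (Fin n → F)) → L →ₗ[F] L →ₗ[F] F)
    (halt : ∀ L : Submodule F (Fin n → F), Module.finrank F L = 2 → ∀ x, f L x x = 0)
    (hnd : ∀ L : Submodule F (Fin n → F), Module.finrank F L = 2 → ∀ x, (∀ y, f L x y = 0) → x = 0)
    (u : Fin n → F) (hu : u ≠ 0) (c : F) (hc : c ≠ 0) :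
    (∀ S ∈ Pclass t g f u c, S.ncard = 3) ∧
    (Pclass t g f u c).PairwiseDisjoint id ∧
    ⋃₀ Pclass t g f u c = {x : Fin n → F | x ∉ Submodule.span F {u}} :=
  Pclass_partition_general F t hq g hg n f halt hnd u hu c hc
end
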